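/- arXiv:2502.17142 — 5 statements merged into one kernel-verified Lean document; each statement's English description precedes it below -/
import Mathlib

section
/- Let A be a finite set, P a probability measure on A, and B ⊆ A. Suppose Neg ⊆ A, ε > 0, K ≥ 1, and F : B \ Neg → 𝒫(A) satisfy: (i) P({x}) ≤ ε·P(F(x)) for every x ∈ B \ Neg; (ii) for every y ∈ A, #{x ∈ B \ Neg : y ∈ F(x)} ≤ K. Then P(B) ≤ P(Neg) + ε·K. -/
/-!
Split `B` into `B ∩ Neg` and `B \ Neg`. On `B \ Neg`, hypothesis (i) bounds the mass by
`ε * ∑ₓ P(F x)`, and exchanging the order of summation rewrites `∑ₓ P(F x)` as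
`∑_y #{x | y ∈ F x} * P y`, which (ii) bounds by `K * ∑_y P y = K`.
-/

open Finset

namespace Finset

variable {ι α R : Type*} [Fintype α] [DecidableEq α]

theorem sum_sum_eq_sum_card_filter_mem_mul [NonAssocSemiring R] (s : Finset ι)
    (F : ι → Finset α) (w : α → R) :
    ∑ x ∈ s, ∑ y ∈ F x, w y = ∑ y, (#{x ∈ s | y ∈ F x} : R) * w y := by
  simp_rw [← Fintype.sum_ite_mem (F _), card_filter, Nat.cast_sum, sum_mul]
  rw [sum_comm]
  simp

theorem sum_sum_le_mul_sum_of_card_filter_mem_le [CommSemiring R] [PartialOrder R]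
    [IsOrderedRing R] {s : Finset ι} {F : ι → Finset α} {w : α → R} {K : R}
    (hw : ∀ y, 0 ≤ w y) (hK : ∀ y, (#{x ∈ s | y ∈ F x} : R) ≤ K) :
    ∑ x ∈ s, ∑ y ∈ F x, w y ≤ K * ∑ y, w y := by
  rw [sum_sum_eq_sum_card_filter_mem_mul, mul_sum]
  exact sum_le_sum fun y _ ↦ mul_le_mul_of_nonneg_right (hK y) (hw y)

end Finset

theorem stmt4_general {A : Type*} [Fintype A] [DecidableEq A]
    (P : A → ℝ) (hP : ∀ x, 0 ≤ P x) (hsum : ∑ x, P x = 1)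
    (B Neg : Finset A) (ε K : ℝ) (hε : 0 < ε)
    (F : A → Finset A)
    (h1 : ∀ x ∈ B \ Neg, P x ≤ ε * ∑ y ∈ F x, P y)
    (h2 : ∀ y : A, (((B \ Neg).filter (fun x => y ∈ F x)).card : ℝ) ≤ K) :
    ∑ x ∈ B, P x ≤ (∑ x ∈ Neg, P x) + ε * K := by
  calc ∑ x ∈ B, P x = ∑ x ∈ B ∩ Neg, P x + ∑ x ∈ B \ Neg, P x :=
        (sum_inter_add_sum_sdiff B Neg P).symm
    _ ≤ ∑ x ∈ Neg, P x + ε * ∑ x ∈ B \ Neg, ∑ y ∈ F x, P y := by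
        rw [mul_sum]
        gcongr with x hx
        · exact fun x _ _ ↦ hP x
        · exact inter_subset_right
        · exact h1 x hx
    _ ≤ ∑ x ∈ Neg, P x + ε * (K * ∑ y, P y) := by
        gcongr
        exact sum_sum_le_mul_sum_of_card_filter_mem_le hP h2
    _ = ∑ x ∈ Neg, P x + ε * K := by rw [hsum, mul_one]

/-- Deterministic core of the invariance lemma: if each point of `B \ Neg` maps to a
set of states of probability at least `P(x)/ε`, quasi-injectively (each `y` is hit by
at most `K` points), then `P(B) ≤ P(Neg) + ε·K`. -/
theorem stmt4 {A : Type*} [Fintype A] [DecidableEq A]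
    (P : A → ℝ) (hP : ∀ x, 0 ≤ P x) (hsum : ∑ x, P x = 1)
    (B Neg : Finset A) (ε K : ℝ) (hε : 0 < ε) (hK : 1 ≤ K)
    (F : A → Finset A)
    (h1 : ∀ x ∈ B \ Neg, P x ≤ ε * ∑ y ∈ F x, P y)
    (h2 : ∀ y : A, (((B \ Neg).filter (fun x => y ∈ F x)).card : ℝ) ≤ K) :
    ∑ x ∈ B, P x ≤ (∑ x ∈ Neg, P x) + ε * K :=
  stmt4_general P hP hsum B Neg ε K hε F h1 h2
end

section
/- Let p ≥ 2, n ≥ 1, and let (d_{ij})_{1≤i≠j≤p} be nonnegative integers with d_{ij} = d_{ji}. For σ = (σ_1=Id, σ_2,...,σ_p) ∈ S_n^{p-1}, let d_{ij}(σ) = #{u : σ_j(σ_i^{-1}(u)) = u} (number of points where σ_i and σ_j agree, interpreted via σ_{ij} = σ_j σ_i^{-1}). Then for any permutation τ ∈ S_p, #{σ ∈ {Id}×S_n^{p-1} : ∀ i≠j, d_{ij}(σ) ≥ d_{ij}} ≤ (n!)^{p-1} / ∏_{i=2}^p (max_{j<i} d_{τ(j)τ(i)})!. -/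
/-!
Since `d_{ij}` is unchanged when every `σ_i` is multiplied on the right by the same permutation,
dropping the normalisation `σ_1 = Id` multiplies the count by exactly `n!`. The unnormalised
tuples are counted by choosing `σ_{τ(1)}, σ_{τ(2)}, …` in turn: `σ_{τ(i)}` must agree with the
already chosen `σ_{τ(j)}`, for a `j < i` attaining `D_i = max_{j<i} d_{τ(j)τ(i)}`, on at least
`D_i` points, which leaves at most `C(n, D_i) (n - D_i)! = n!/D_i!` choices.
-/

open Finset Equiv Nat

theorem Fin.snoc_init_apply_of_ne_last {α : Type*} {p : ℕ} (f : Fin (p + 1) → α) (a : α)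
    {j : Fin (p + 1)} (hj : j ≠ Fin.last p) :
    Fin.snoc (Fin.init f) a j = f j := by
  rw [← Fin.update_snoc_last, Fin.snoc_init_self, Function.update_of_ne hj]

theorem card_le_prod_of_successive_choices {α : Type*} [DecidableEq α] :
    ∀ {p : ℕ} (T : Finset (Fin p → α)) (A : Fin p → (Fin p → α) → Finset α) (N : Fin p → ℕ),
      (∀ i f g, (∀ j < i, f j = g j) → A i f = A i g) → (∀ i f, #(A i f) ≤ N i) →
      (∀ f ∈ T, ∀ i, f i ∈ A i f) → #T ≤ ∏ i, N i
  | 0, T, _, _, _, _, _ => by simpa using card_le_one_of_subsingleton T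
  | p + 1, T, A, N, hA, hN, hT => by
    rcases T.eq_empty_or_nonempty with rfl | ⟨f₀, -⟩
    · simp
    set a₀ := f₀ (Fin.last p)
    have hA_snoc : ∀ i f, A i (Fin.snoc (Fin.init f) a₀) = A i f :=
      fun i f => hA i _ _ fun j hj => Fin.snoc_init_apply_of_ne_last f a₀ (Fin.ne_last_of_lt hj)
    have hfibre : ∀ g ∈ T.image Fin.init, #{f ∈ T | Fin.init f = g} ≤ N (Fin.last p) := by
      intro g _
      refine (card_le_card_of_injOn (· (Fin.last p)) (t := A (Fin.last p) (Fin.snoc g a₀))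
        ?_ ?_).trans (hN _ _)
      · intro f hf
        obtain ⟨hfT, rfl⟩ := mem_filter.mp hf
        simpa [hA_snoc] using hT f hfT (Fin.last p)
      · intro f hf f' hf' hlast
        dsimp only at hlast
        rw [← Fin.snoc_init_self f, ← Fin.snoc_init_self f', hlast,
          (mem_filter.mp hf).2, (mem_filter.mp hf').2]
    have himage : #(T.image Fin.init) ≤ ∏ i : Fin p, N i.castSucc := by
      refine card_le_prod_of_successive_choices _ (fun i g => A i.castSucc (Fin.snoc g a₀))
        (fun i => N i.castSucc) ?_ (fun i g => hN _ _) ?_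
      · intro i g g' hgg'
        refine hA _ _ _ fun k hk => ?_
        obtain ⟨k, rfl⟩ := Fin.exists_castSucc_eq.mpr (Fin.ne_last_of_lt hk)
        simp only [Fin.snoc_castSucc]
        exact hgg' k (Fin.castSucc_lt_castSucc_iff.mp hk)
      · intro g hg i
        obtain ⟨f, hf, rfl⟩ := mem_image.mp hg
        simpa [hA_snoc, Fin.init] using hT f hf i.castSucc
    calc #T ≤ N (Fin.last p) * #(T.image Fin.init) := card_le_mul_card_image _ _ hfibre
      _ ≤ ∏ i, N i := by
        rw [Fin.prod_univ_castSucc, mul_comm]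
        gcongr

theorem card_filter_eq_one_and_mul_card {ι G : Type*} [Fintype ι] [DecidableEq ι] [Group G]
    [Fintype G] [DecidableEq G] (P : (ι → G) → Prop) [DecidablePred P]
    (hP : ∀ σ g, P (fun i => σ i * g) ↔ P σ) (k : ι) :
    #{σ | σ k = 1 ∧ P σ} * Fintype.card G = #{σ | P σ} := by
  rw [mul_comm, ← Finset.card_univ, ← card_product]
  symm
  refine card_nbij' (fun σ => (σ k, fun i => σ i * (σ k)⁻¹)) (fun gσ i => gσ.2 i * gσ.1)
    ?_ ?_ ?_ ?_ <;> intro x hx <;> simp_all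

theorem Nat.choose_mul_factorial_mul_factorial_le (n k : ℕ) :
    n.choose k * (n - k)! * k ! ≤ n ! := by
  rcases le_or_gt k n with hk | hk
  · rw [mul_right_comm, choose_mul_factorial_mul_factorial hk]
  · simp [choose_eq_zero_of_lt hk]

theorem Nat.prod_choose_mul_factorial_mul_prod_factorial_le {ι : Type*} (s : Finset ι) (n : ℕ)
    (k : ι → ℕ) : (∏ i ∈ s, n.choose (k i) * (n - k i)!) * ∏ i ∈ s, (k i)! ≤ n ! ^ #s := by
  rw [← prod_mul_distrib, ← prod_const]
  exact prod_le_prod (fun _ _ => zero_le _) fun i _ => choose_mul_factorial_mul_factorial_le n (k i)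

section Perm

variable {α : Type*} [Fintype α] [DecidableEq α]

theorem card_perm_fixing (S : Finset α) :
    #{σ : Perm α | ∀ a ∈ S, σ a = a} = (Fintype.card α - #S)! := by
  have hcompl : Fintype.card {a // a ∉ S} = Fintype.card α - #S := by
    rw [Fintype.card_subtype, filter_not, filter_mem_eq_inter, univ_inter,
      card_sdiff_of_subset (subset_univ _), Finset.card_univ]
  rw [← Fintype.card_subtype, ← hcompl, ← Fintype.card_perm]
  exact Fintype.card_congr ((Perm.subtypeEquivSubtypePerm (· ∉ S)).trans
    (Equiv.subtypeEquivRight (by simp))).symm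

theorem card_perm_fixing_at_least_le (k : ℕ) :
    #{σ : Perm α | k ≤ #{a | σ a = a}} ≤ (Fintype.card α).choose k * (Fintype.card α - k)! := by
  have hcover : ({σ : Perm α | k ≤ #{a | σ a = a}} : Finset _) ⊆
      (powersetCard k univ).biUnion fun S => {σ : Perm α | ∀ a ∈ S, σ a = a} := by
    intro σ hσ
    obtain ⟨S, hS, hSk⟩ := exists_subset_card_eq (mem_filter.mp hσ).2
    exact mem_biUnion.mpr ⟨S, mem_powersetCard.mpr ⟨subset_univ S, hSk⟩,
      mem_filter.mpr ⟨mem_univ σ, fun a ha => (mem_filter.mp (hS ha)).2⟩⟩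
  calc _ ≤ _ := card_le_card hcover
    _ ≤ ∑ S ∈ powersetCard k univ, #{σ : Perm α | ∀ a ∈ S, σ a = a} := card_biUnion_le
    _ = _ := by
      rw [sum_congr rfl fun S hS => by rw [card_perm_fixing, (mem_powersetCard.mp hS).2],
        sum_const, card_powersetCard, Finset.card_univ, smul_eq_mul]

theorem card_perm_fixing_at_least_mul_inv_le (k : ℕ) (x : Perm α) :
    #{σ : Perm α | k ≤ #{a | (σ * x⁻¹) a = a}} ≤
      (Fintype.card α).choose k * (Fintype.card α - k)! := by
  refine (card_equiv (Equiv.mulRight x⁻¹) fun σ => ?_).trans_le (card_perm_fixing_at_least_le k)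
  simp only [mem_filter, mem_univ, true_and]
  rfl

theorem card_perm_tuples_le_prod {p : ℕ} (d : Fin p → Fin p → ℕ) (τ : Perm (Fin p)) :
    #{σ : Fin p → Perm α | ∀ i j, i ≠ j → d i j ≤ #{a | (σ j * (σ i)⁻¹) a = a}} ≤
      ∏ i, (Fintype.card α).choose ((univ.filter (· < i)).sup fun j => d (τ j) (τ i)) *
        (Fintype.card α - (univ.filter (· < i)).sup fun j => d (τ j) (τ i))! := by
  rw [← card_map ⟨(· ∘ τ), τ.surjective.injective_comp_right⟩]
  refine card_le_prod_of_successive_choices _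
    (fun i σ => ({π | ∀ j < i, d (τ j) (τ i) ≤ #{a | (π * (σ j)⁻¹) a = a}} : Finset (Perm α)))
    _ ?_ ?_ ?_
  · intro i σ σ' h
    exact filter_congr fun π _ => forall₂_congr fun j hj => by rw [h j hj]
  · intro i σ
    rcases (univ.filter (· < i)).eq_empty_or_nonempty with h | h
    · rw [h, sup_empty, bot_eq_zero, choose_zero_right, one_mul, Nat.sub_zero,
        ← Fintype.card_perm]
      exact card_le_univ _
    · obtain ⟨j, hj, hsup⟩ := exists_mem_eq_sup _ h fun j => d (τ j) (τ i)
      rw [hsup]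
      refine (card_le_card fun π hπ => ?_).trans (card_perm_fixing_at_least_mul_inv_le _ (σ j))
      simp only [mem_filter, mem_univ, true_and] at hj hπ ⊢
      exact hπ j hj
  · intro f hf i
    obtain ⟨σ, hσ, rfl⟩ := mem_map.mp hf
    simp only [mem_filter, mem_univ, true_and] at hσ ⊢
    exact fun j hj => hσ (τ j) (τ i) (τ.injective.ne hj.ne)

end Perm

/-- Counting bound (Theorem "permcount"): for any `τ ∈ S_p`, the number of tuples
`σ ∈ {Id} × S_n^{p-1}` with `d_{ij}(σ) ≥ d_{ij}` for all `i ≠ j` is at most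
`(n!)^{p-1} / ∏_{i=2}^p (max_{j<i} d_{τ(j)τ(i)})!`. -/
theorem stmt5 (p n : ℕ) (hp : 2 ≤ p)
    (d : Fin p → Fin p → ℕ)
    (τ : Equiv.Perm (Fin p)) :
    ((Finset.univ.filter (fun σ : Fin p → Equiv.Perm (Fin n) =>
        σ ⟨0, by omega⟩ = 1 ∧ ∀ i j, i ≠ j →
          d i j ≤ (Finset.univ.filter (fun u : Fin n => (σ j * (σ i)⁻¹) u = u)).card)).card : ℝ)
      ≤ ((n.factorial : ℝ)) ^ (p - 1) /
        ∏ i ∈ Finset.univ.filter (fun i : Fin p => (0 : ℕ) < (i : ℕ)),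
          ((((Finset.univ.filter (fun j : Fin p => j < i)).sup
              (fun j => d (τ j) (τ i))).factorial : ℝ)) := by
  obtain ⟨D, hD⟩ : ∃ D : Fin p → ℕ,
      ∀ i, (univ.filter (· < i)).sup (fun j => d (τ j) (τ i)) = D i := ⟨_, fun _ => rfl⟩
  have hall := card_perm_tuples_le_prod (α := Fin n) d τ
  have hslice := card_filter_eq_one_and_mul_card
    (fun σ : Fin p → Perm (Fin n) => ∀ i j, i ≠ j → d i j ≤ #{u | (σ j * (σ i)⁻¹) u = u})
    (fun σ g => by simp only [mul_inv_rev, mul_assoc, mul_inv_cancel_left]) ⟨0, by omega⟩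
  simp only [hD, Fintype.card_fin, Fintype.card_perm] at hall hslice ⊢
  have hD_zero : ∏ i ∈ univ.filter (fun i : Fin p => 0 < (i : ℕ)), ((D i)! : ℝ) =
      ∏ i, ((D i)! : ℝ) := by
    refine prod_filter_of_ne fun i _ hi => Nat.pos_of_ne_zero fun hi0 => hi ?_
    have : univ.filter (· < i) = ∅ := filter_eq_empty_iff.mpr fun j _ hj => by
      simp [Fin.lt_def, hi0] at hj
    simp [← hD, this]
  rw [hD_zero, le_div_iff₀ (by positivity)]
  norm_cast
  refine Nat.le_of_mul_le_mul_right ?_ (factorial_pos n)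
  rw [mul_right_comm, hslice]
  calc _ ≤ (∏ i, n.choose (D i) * (n - D i)!) * ∏ i, (D i)! := Nat.mul_le_mul_right _ hall
    _ ≤ n ! ^ p := by simpa using prod_choose_mul_factorial_mul_prod_factorial_le univ n D
    _ = n ! ^ (p - 1) * n ! := by rw [← pow_succ, Nat.sub_add_cancel (by omega)]
end

section
/- Let p ≥ 1 and let (x_{ij})_{1≤i≠j≤p} be real numbers in [0,1] with x_{ij} = x_{ji}. For τ ∈ S_p set S_*(τ) = (1/(p-1)) ∑_{i=2}^p max_{j<i} x_{τ(j)τ(i)} (with S_* = 0 when p = 1). Then there exists τ ∈ S_p such that S_*(τ) ≥ (2S)/(1+S), where S = (1/(p(p-1))) ∑_{1≤i≠j≤p} x_{ij}². -/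
/-!
Order the vertices as Prim's algorithm does, here realised as a permutation `τ` whose attachment
weights `m i = max_{j < i} x (τ j) (τ i)` are lexicographically maximal. Then every edge
`{τ a, τ b}` with `a < b` weighs at most `m (a + 1)` and at most `m b`, whence
`∑_{i ≠ j} x_{ij}² ≤ W² + P` for `W = ∑ m i` and `P = ∑ m i²`. As `m i ∈ [0, 1]`, we have
`P ≤ W` and `W - P ≥ t (1 - t)` for the deficit `t = (p - 1) - W`; together these give
`(2 (p - 1) - W) (W² + P) ≤ W (p - 1) p`, which rearranges to `2S / (1 + S) ≤ W / (p - 1)`.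
-/

open Finset

section AttachWeight

variable {p : ℕ} (x : Fin p → Fin p → ℝ)

/-- The weight of the edge Prim's algorithm uses to attach `τ i` when it visits the vertices in
the order `τ`; it is `0` at `i = 0`, where the supremum is empty. -/
noncomputable def attachWeight (τ : Equiv.Perm (Fin p)) (i : Fin p) : ℝ :=
  ⨆ j : {j : Fin p // j < i}, x (τ j) (τ i)

variable {x}

theorem le_attachWeight (τ : Equiv.Perm (Fin p)) {i j : Fin p} (h : j < i) :
    x (τ j) (τ i) ≤ attachWeight x τ i :=
  le_ciSup (f := fun j : {j : Fin p // j < i} => x (τ j) (τ i))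
    (Set.finite_range _).bddAbove ⟨j, h⟩

theorem attachWeight_nonneg (h0 : ∀ i j, 0 ≤ x i j) (τ : Equiv.Perm (Fin p)) (i : Fin p) :
    0 ≤ attachWeight x τ i :=
  Real.iSup_nonneg fun _ => h0 _ _

theorem attachWeight_le_one (h1 : ∀ i j, x i j ≤ 1) (τ : Equiv.Perm (Fin p)) (i : Fin p) :
    attachWeight x τ i ≤ 1 :=
  Real.iSup_le (fun _ => h1 _ _) zero_le_one

theorem attachWeight_zero {n : ℕ} (x : Fin (n + 1) → Fin (n + 1) → ℝ)
    (τ : Equiv.Perm (Fin (n + 1))) :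
    attachWeight x τ 0 = 0 :=
  have : IsEmpty {j : Fin (n + 1) // j < 0} := ⟨fun j => Fin.not_lt_zero _ j.2⟩
  Real.iSup_of_isEmpty _

theorem attachWeight_congr {τ σ : Equiv.Perm (Fin p)} {i : Fin p} (h : ∀ j ≤ i, τ j = σ j) :
    attachWeight x τ i = attachWeight x σ i := by
  unfold attachWeight
  congr! 2 with j
  rw [h _ j.2.le, h i le_rfl]

/-- Prim's greedy order, obtained as a permutation whose attachment weights are
lexicographically maximal: if some `x (τ a) (τ b)` beat `attachWeight x τ c` with `a < c ≤ b`,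
swapping `c` and `b` would keep the weights before `c` and raise the one at `c`. -/
theorem exists_perm_le_attachWeight (x : Fin p → Fin p → ℝ) :
    ∃ τ : Equiv.Perm (Fin p), ∀ a c b : Fin p, a < c → c ≤ b →
      x (τ a) (τ b) ≤ attachWeight x τ c := by
  obtain ⟨τ, -, hτ⟩ := exists_max_image univ (fun τ => toLex (attachWeight x τ)) univ_nonempty
  refine ⟨τ, fun a c b hac hcb => le_of_not_gt fun hlt => ?_⟩
  set σ := τ * Equiv.swap c b
  have hσ : ∀ j < c, σ j = τ j := fun j hj =>
    congrArg τ (Equiv.swap_apply_of_ne_of_ne hj.ne (hj.trans_le hcb).ne)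
  have hlex : toLex (attachWeight x τ) < toLex (attachWeight x σ) := by
    refine ⟨c, fun j hj => attachWeight_congr fun k hk => (hσ k (hk.trans_lt hj)).symm, ?_⟩
    calc attachWeight x τ c < x (τ a) (τ b) := hlt
      _ = x (σ a) (σ c) := by rw [hσ a hac, Equiv.Perm.mul_apply, Equiv.swap_apply_left]
      _ ≤ attachWeight x σ c := le_attachWeight σ hac
  exact (hτ σ (mem_univ _)).not_gt hlex

end AttachWeight

section PairSums

variable {ι : Type*} [Fintype ι] [LinearOrder ι]

theorem sum_filter_fst_eq_snd (f : ι → ι → ℝ) :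
    ∑ ij ∈ univ.filter (fun ij : ι × ι => ij.1 = ij.2), f ij.1 ij.2 = ∑ i, f i i := by
  simp [sum_filter, Fintype.sum_prod_type]

theorem sum_filter_ne_eq_two_mul_sum_filter_lt (f : ι → ι → ℝ) (hf : ∀ i j, f i j = f j i) :
    ∑ ij ∈ univ.filter (fun ij : ι × ι => ij.1 ≠ ij.2), f ij.1 ij.2
      = 2 * ∑ ij ∈ univ.filter (fun ij : ι × ι => ij.1 < ij.2), f ij.1 ij.2 := by
  have hgt : ∑ ij ∈ univ.filter (fun ij : ι × ι => ij.2 < ij.1), f ij.1 ij.2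
      = ∑ ij ∈ univ.filter (fun ij : ι × ι => ij.1 < ij.2), f ij.1 ij.2 :=
    sum_equiv (Equiv.prodComm ι ι) (by simp) (fun _ _ => hf _ _)
  rw [two_mul]
  nth_rw 2 [← hgt]
  rw [← sum_union (disjoint_filter.2 fun _ _ h => h.asymm), ← filter_or]
  simp_rw [ne_iff_lt_or_gt]

theorem sum_filter_le_eq_sum_filter_lt_add (f : ι → ι → ℝ) :
    ∑ ij ∈ univ.filter (fun ij : ι × ι => ij.1 ≤ ij.2), f ij.1 ij.2
      = ∑ ij ∈ univ.filter (fun ij : ι × ι => ij.1 < ij.2), f ij.1 ij.2 + ∑ i, f i i := by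
  rw [← sum_filter_fst_eq_snd, ← sum_union (disjoint_filter.2 fun _ _ h => h.ne), ← filter_or]
  simp_rw [le_iff_lt_or_eq]

theorem sq_sum_add_sum_sq (m : ι → ℝ) :
    (∑ i, m i) ^ 2 + ∑ i, m i ^ 2
      = 2 * ∑ ij ∈ univ.filter (fun ij : ι × ι => ij.1 ≤ ij.2), m ij.1 * m ij.2 := by
  have hsq : (∑ i, m i) ^ 2
      = ∑ ij ∈ univ.filter (fun ij : ι × ι => ij.1 ≠ ij.2), m ij.1 * m ij.2 + ∑ i, m i * m i := by
    rw [← sum_filter_fst_eq_snd fun i j => m i * m j, add_comm, sum_filter_add_sum_filter_not,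
      sq, sum_mul_sum, ← Fintype.sum_prod_type']
  rw [hsq, sum_filter_ne_eq_two_mul_sum_filter_lt (fun i j => m i * m j) fun i j => mul_comm _ _,
    sum_filter_le_eq_sum_filter_lt_add fun i j => m i * m j]
  simp only [sq]
  ring

end PairSums

theorem sum_filter_lt_mul_add_one_le {n : ℕ} (m : Fin (n + 1) → ℝ) (hm : ∀ i, 0 ≤ m i) :
    ∑ ij ∈ univ.filter (fun ij : Fin (n + 1) × Fin (n + 1) => ij.1 < ij.2),
        m (ij.1 + 1) * m ij.2
      ≤ ∑ ij ∈ univ.filter (fun ij : Fin (n + 1) × Fin (n + 1) => ij.1 ≤ ij.2),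
        m ij.1 * m ij.2 := by
  have hinj : Function.Injective fun ij : Fin (n + 1) × Fin (n + 1) => (ij.1 + 1, ij.2) :=
    fun a b h => by simpa [Prod.ext_iff] using h
  rw [← sum_image (f := fun ij => m ij.1 * m ij.2) hinj.injOn]
  refine sum_le_sum_of_subset_of_nonneg ?_ fun ij _ _ => mul_nonneg (hm _) (hm _)
  simp only [subset_iff, mem_image, mem_filter, mem_univ, true_and]
  rintro _ ⟨ij, hij, rfl⟩
  exact Fin.add_one_le_of_lt hij

theorem sum_filter_ne_sq_le_of_le_attachWeight {n : ℕ} {x : Fin (n + 1) → Fin (n + 1) → ℝ}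
    (h0 : ∀ i j, 0 ≤ x i j) (hsym : ∀ i j, x i j = x j i) {τ : Equiv.Perm (Fin (n + 1))}
    (hτ : ∀ a c b, a < c → c ≤ b → x (τ a) (τ b) ≤ attachWeight x τ c) :
    ∑ ij ∈ univ.filter (fun ij : Fin (n + 1) × Fin (n + 1) => ij.1 ≠ ij.2), x ij.1 ij.2 ^ 2
      ≤ (∑ i, attachWeight x τ i) ^ 2 + ∑ i, attachWeight x τ i ^ 2 := by
  set m := attachWeight x τ
  have hm : ∀ i, 0 ≤ m i := attachWeight_nonneg h0 τ
  calc ∑ ij ∈ univ.filter (fun ij : Fin (n + 1) × Fin (n + 1) => ij.1 ≠ ij.2), x ij.1 ij.2 ^ 2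
      = ∑ ij ∈ univ.filter (fun ij : Fin (n + 1) × Fin (n + 1) => ij.1 ≠ ij.2),
          x (τ ij.1) (τ ij.2) ^ 2 :=
        (sum_equiv (τ.prodCongr τ) (by simp) fun _ _ => rfl).symm
    _ = 2 * ∑ ij ∈ univ.filter (fun ij : Fin (n + 1) × Fin (n + 1) => ij.1 < ij.2),
          x (τ ij.1) (τ ij.2) ^ 2 :=
        sum_filter_ne_eq_two_mul_sum_filter_lt (fun i j => x (τ i) (τ j) ^ 2) fun i j => by
          rw [hsym]
    _ ≤ 2 * ∑ ij ∈ univ.filter (fun ij : Fin (n + 1) × Fin (n + 1) => ij.1 < ij.2),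
          m (ij.1 + 1) * m ij.2 := by
        gcongr with ij hij
        have hab : ij.1 < ij.2 := (mem_filter.1 hij).2
        have hsucc : ij.1 < ij.1 + 1 := Fin.lt_add_one_iff.2 (hab.trans_le (Fin.le_last _))
        rw [sq]
        exact mul_le_mul (hτ _ _ _ hsucc (Fin.add_one_le_of_lt hab)) (le_attachWeight τ hab)
          (h0 _ _) (hm _)
    _ ≤ 2 * ∑ ij ∈ univ.filter (fun ij : Fin (n + 1) × Fin (n + 1) => ij.1 ≤ ij.2),
          m ij.1 * m ij.2 := by
        gcongr
        exact sum_filter_lt_mul_add_one_le m hm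
    _ = (∑ i, m i) ^ 2 + ∑ i, m i ^ 2 := (sq_sum_add_sum_sq m).symm

theorem two_mul_div_one_add_le_div {n W Q : ℝ} (hn : 0 ≤ n) (hQ : 0 ≤ Q)
    (hQW : (2 * n - W) * Q ≤ W * (n * (n + 1))) :
    2 * (Q / (n * (n + 1))) / (1 + Q / (n * (n + 1))) ≤ W / n := by
  rcases hn.eq_or_lt with rfl | hn
  · simp
  rw [div_le_div_iff₀ (by positivity) hn]
  field_simp
  linarith

section Weights

variable {ι : Type*} [Fintype ι] (w : ι → ℝ)

theorem mul_one_sub_le_sum_sub_sum_sq (h1 : ∀ i, w i ≤ 1) :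
    (Fintype.card ι - ∑ i, w i) * (1 - (Fintype.card ι - ∑ i, w i))
      ≤ ∑ i, w i - ∑ i, w i ^ 2 := by
  set t := (Fintype.card ι : ℝ) - ∑ i, w i
  have ht : t = ∑ i, (1 - w i) := by simp [t, sum_sub_distrib]
  have hle : ∀ i, 1 - w i ≤ t := fun i =>
    ht ▸ single_le_sum (fun j _ => sub_nonneg.2 (h1 j)) (mem_univ i)
  calc t * (1 - t) = ∑ i, (1 - t) * (1 - w i) := by rw [← mul_sum, ← ht, mul_comm]
    _ ≤ ∑ i, w i * (1 - w i) := sum_le_sum fun i _ =>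
        mul_le_mul_of_nonneg_right (by linarith [hle i]) (sub_nonneg.2 (h1 i))
    _ = ∑ i, w i - ∑ i, w i ^ 2 := by rw [← sum_sub_distrib]; simp only [mul_sub, sq, mul_one]

theorem two_mul_div_one_add_le_sum_div_card (h0 : ∀ i, 0 ≤ w i) (h1 : ∀ i, w i ≤ 1) {Q : ℝ}
    (hQ0 : 0 ≤ Q) (hQ : Q ≤ (∑ i, w i) ^ 2 + ∑ i, w i ^ 2) :
    2 * (Q / (Fintype.card ι * (Fintype.card ι + 1)))
        / (1 + Q / (Fintype.card ι * (Fintype.card ι + 1)))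
      ≤ (∑ i, w i) / Fintype.card ι := by
  refine two_mul_div_one_add_le_div (Nat.cast_nonneg _) hQ0 ?_
  have hP : 0 ≤ ∑ i, w i ^ 2 := sum_nonneg fun i _ => sq_nonneg _
  have hPW : ∑ i, w i ^ 2 ≤ ∑ i, w i :=
    sum_le_sum fun i _ => pow_le_of_le_one (h0 i) (h1 i) two_ne_zero
  have hWn : ∑ i, w i ≤ Fintype.card ι := by simpa using sum_le_sum fun i (_ : i ∈ univ) => h1 i
  have hdef := mul_one_sub_le_sum_sub_sum_sq w h1
  nlinarith [mul_nonneg (mul_nonneg (sub_nonneg.2 hWn) (sub_nonneg.2 hWn)) (sub_nonneg.2 hPW)]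

end Weights

/-- Maximal spanning tree lower bound: for symmetric weights `x_{ij} ∈ [0,1]` on `K_p`,
there is `τ ∈ S_p` whose greedy tree weight `S_*(τ)` is at least `2S/(1+S)`, where
`S = (1/(p(p-1))) ∑_{i≠j} x_{ij}²`. -/
theorem stmt13 (p : ℕ) (hp : 1 ≤ p) (x : Fin p → Fin p → ℝ)
    (h0 : ∀ i j, 0 ≤ x i j) (h1 : ∀ i j, x i j ≤ 1)
    (hsym : ∀ i j, x i j = x j i) :
    let S : ℝ := (1 / ((p : ℝ) * ((p : ℝ) - 1))) *
      ∑ ij ∈ Finset.univ.filter (fun ij : Fin p × Fin p => ij.1 ≠ ij.2), (x ij.1 ij.2) ^ 2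
    ∃ τ : Equiv.Perm (Fin p),
      (2 * S) / (1 + S) ≤ (1 / ((p : ℝ) - 1)) *
        ∑ i ∈ Finset.univ.filter (fun i : Fin p => (0 : ℕ) < (i : ℕ)),
          ⨆ j : {j : Fin p // j < i}, x (τ j) (τ i) := by
  intro S
  obtain ⟨n, rfl⟩ : ∃ n, p = n + 1 := ⟨p - 1, by omega⟩
  obtain ⟨τ, hτ⟩ := exists_perm_le_attachWeight x
  refine ⟨τ, ?_⟩
  change _ ≤ _ * ∑ i ∈ _, attachWeight x τ i
  have hQ := sum_filter_ne_sq_le_of_le_attachWeight h0 hsym hτ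
  rw [Fin.sum_univ_succ, Fin.sum_univ_succ (fun i => attachWeight x τ i ^ 2), attachWeight_zero,
    zero_add, zero_pow two_ne_zero, zero_add] at hQ
  have hS : S = (∑ ij ∈ univ.filter (fun ij : Fin (n + 1) × Fin (n + 1) => ij.1 ≠ ij.2),
      x ij.1 ij.2 ^ 2) / (n * (n + 1)) := by
    simp only [S]
    push_cast
    ring
  have hW : ∑ i ∈ univ.filter (fun i : Fin (n + 1) => 0 < (i : ℕ)), attachWeight x τ i
      = ∑ i : Fin n, attachWeight x τ i.succ := by
    rw [sum_filter_of_ne fun i _ hi =>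
      Nat.pos_of_ne_zero fun hi0 => hi ((Fin.ext hi0 : i = 0) ▸ attachWeight_zero x τ),
      Fin.sum_univ_succ, attachWeight_zero, zero_add]
  rw [hS, hW, Nat.cast_add_one, add_sub_cancel_right, one_div_mul_eq_div]
  simpa using two_mul_div_one_add_le_sum_div_card (fun i : Fin n => attachWeight x τ i.succ)
    (fun _ => attachWeight_nonneg h0 τ _) (fun _ => attachWeight_le_one h1 τ _)
    (sum_nonneg fun _ _ => sq_nonneg _) hQ
end

section
/- Let 0 ≤ x ≤ 1, let p ≥ 2, let k_1, k_2 ≥ 1 with k_1 + k_2 = p, and define α_1 = (k_1-1)/(p-1), α_2 = (k_2-1)/(p-1), α_3 = 1/(p-1), β_1 = k_1(k_1-1)/(p(p-1)), β_2 = k_2(k_2-1)/(p(p-1)), β_3 = 2k_1k_2/(p(p-1)). Then for all S_1, S_2 with x² ≤ S_1, S_2 ≤ 1: α_1·(2S_1/(1+S_1)) + α_2·(2S_2/(1+S_2)) + α_3·x ≥ 2(β_1S_1 + β_2S_2 + β_3x²)/(1 + β_1S_1 + β_2S_2 + β_3x²). -/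
/-!
Put `f s = 2 s / (1 + s) = 2 - 2 / (1 + s)` and `S₃ = x²`. Since `f (x²) ≤ x` (AM-GM), it is
enough to show `f (∑ βᵢ Sᵢ) ≤ ∑ αᵢ f Sᵢ`, and since `∑ αᵢ = ∑ βᵢ = 1` this is the reverse
Jensen-type inequality `(∑ αᵢ / aᵢ) (∑ βᵢ aᵢ) ≤ 1` for `aᵢ = 1 + Sᵢ`. After scaling `a₃ = 1`
we have `a₁, a₂ ∈ [1, 2]`; the left side is convex in each of `a₁`, `a₂` separately, so it is
maximised at a corner of `[1, 2]²`, where it is a polynomial inequality in `k₁, k₂`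
(an equality at `(1, 1)`).
-/

open Set

lemma div_add_mul_mul_add_le_of_Icc {a b c d u M : ℝ} (had : 0 ≤ a * d) (hu : u ∈ Icc 1 2)
    (h₁ : (a + b) * (c + d) ≤ M) (h₂ : (a / 2 + b) * (c * 2 + d) ≤ M) :
    (a / u + b) * (c * u + d) ≤ M := by
  obtain ⟨hu₁, hu₂⟩ := hu
  have hu₀ : 0 < u := by linarith
  -- the chord of the convex function `1 / u` over `[1, 2]`
  have chord : 1 / u ≤ (3 - u) / 2 := by
    rw [div_le_div_iff₀ hu₀ two_pos]
    nlinarith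
  calc (a / u + b) * (c * u + d) = a * c + a * d * (1 / u) + b * c * u + b * d := by
        field_simp; ring
    _ ≤ a * c + a * d * ((3 - u) / 2) + b * c * u + b * d := by gcongr
    _ = (2 - u) * ((a + b) * (c + d)) + (u - 1) * ((a / 2 + b) * (c * 2 + d)) := by ring
    _ ≤ (2 - u) * M + (u - 1) * M := by gcongr
    _ = M := by ring

lemma inv_weighted_mul_weighted_le_of_Icc {K₁ K₂ u₁ u₂ : ℝ} (hK₁ : 1 ≤ K₁) (hK₂ : 1 ≤ K₂)
    (hu₁ : u₁ ∈ Icc 1 2) (hu₂ : u₂ ∈ Icc 1 2) :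
    ((K₁ - 1) / u₁ + (K₂ - 1) / u₂ + 1) * (K₁ * (K₁ - 1) * u₁ + K₂ * (K₂ - 1) * u₂ + 2 * K₁ * K₂)
      ≤ (K₁ + K₂) * (K₁ + K₂ - 1) ^ 2 := by
  have hm : 0 ≤ K₁ - 1 := by linarith
  have hn : 0 ≤ K₂ - 1 := by linarith
  have hmn := mul_nonneg hm hn
  -- with `m = K₁ - 1`, `n = K₂ - 1`, the right side minus the left side at the corners is
  -- `0`, `m n (n + 1) / 2`, `m n (m + 1) / 2` and `m n (m + n + 2)`
  have h_corner : ∀ v, v = 1 ∨ v = 2 →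
      ((K₁ - 1) / v + (K₂ - 1) / u₂ + 1) * (K₁ * (K₁ - 1) * v + K₂ * (K₂ - 1) * u₂ + 2 * K₁ * K₂)
        ≤ (K₁ + K₂) * (K₁ + K₂ - 1) ^ 2 := by
    rintro v hv
    have hv₀ : 0 ≤ v := by rcases hv with rfl | rfl <;> norm_num
    calc _ = ((K₂ - 1) / u₂ + ((K₁ - 1) / v + 1))
          * (K₂ * (K₂ - 1) * u₂ + (K₁ * (K₁ - 1) * v + 2 * K₁ * K₂)) := by ring
      _ ≤ _ := by
        refine div_add_mul_mul_add_le_of_Icc (by positivity) hu₂ ?_ ?_ <;>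
          rcases hv with rfl | rfl <;> nlinarith
  have hu₂₀ : 0 ≤ u₂ := by linarith [hu₂.1]
  calc _ = ((K₁ - 1) / u₁ + ((K₂ - 1) / u₂ + 1))
        * (K₁ * (K₁ - 1) * u₁ + (K₂ * (K₂ - 1) * u₂ + 2 * K₁ * K₂)) := by ring
    _ ≤ _ := by
      refine div_add_mul_mul_add_le_of_Icc (by positivity) hu₁ ?_ ?_
      · convert h_corner 1 (by norm_num) using 1; ring
      · convert h_corner 2 (by norm_num) using 1; ring

lemma inv_weighted_mul_weighted_le {K₁ K₂ a₁ a₂ a₃ : ℝ} (hK₁ : 1 ≤ K₁) (hK₂ : 1 ≤ K₂)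
    (ha₃ : 0 < a₃) (ha₁ : a₁ ∈ Icc a₃ (2 * a₃)) (ha₂ : a₂ ∈ Icc a₃ (2 * a₃)) :
    ((K₁ - 1) / a₁ + (K₂ - 1) / a₂ + 1 / a₃)
        * (K₁ * (K₁ - 1) * a₁ + K₂ * (K₂ - 1) * a₂ + 2 * K₁ * K₂ * a₃)
      ≤ (K₁ + K₂) * (K₁ + K₂ - 1) ^ 2 := by
  have mem_Icc_div {a : ℝ} (ha : a ∈ Icc a₃ (2 * a₃)) : a / a₃ ∈ Icc 1 2 := by
    rwa [mem_Icc, le_div_iff₀ ha₃, div_le_iff₀ ha₃, one_mul]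
  have ha₁₀ : a₁ ≠ 0 := by linarith [ha₁.1]
  have ha₂₀ : a₂ ≠ 0 := by linarith [ha₂.1]
  convert inv_weighted_mul_weighted_le_of_Icc hK₁ hK₂ (mem_Icc_div ha₁) (mem_Icc_div ha₂) using 1
  field_simp

lemma weighted_harmonic_le {K₁ K₂ P a₁ a₂ a₃ : ℝ} (hK₁ : 1 ≤ K₁) (hK₂ : 1 ≤ K₂)
    (hP : K₁ + K₂ = P) (ha₃ : 0 < a₃) (ha₁ : a₁ ∈ Icc a₃ (2 * a₃)) (ha₂ : a₂ ∈ Icc a₃ (2 * a₃)) :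
    (K₁ - 1) / (P - 1) / a₁ + (K₂ - 1) / (P - 1) / a₂ + 1 / (P - 1) / a₃
      ≤ 1 / (K₁ * (K₁ - 1) / (P * (P - 1)) * a₁ + K₂ * (K₂ - 1) / (P * (P - 1)) * a₂
        + 2 * K₁ * K₂ / (P * (P - 1)) * a₃) := by
  subst hP
  have hP₁ : 0 < K₁ + K₂ - 1 := by linarith
  have ha₁₀ : 0 < a₁ := by linarith [ha₁.1]
  have ha₂₀ : 0 < a₂ := by linarith [ha₂.1]
  rw [le_div_iff₀ (by positivity)]
  calc _ = ((K₁ - 1) / a₁ + (K₂ - 1) / a₂ + 1 / a₃)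
        * (K₁ * (K₁ - 1) * a₁ + K₂ * (K₂ - 1) * a₂ + 2 * K₁ * K₂ * a₃)
        / ((K₁ + K₂) * (K₁ + K₂ - 1) ^ 2) := by
        field_simp
    _ ≤ 1 := div_le_one_of_le₀ (inv_weighted_mul_weighted_le hK₁ hK₂ ha₃ ha₁ ha₂) (by positivity)

lemma two_mul_div_one_add_le_of_harmonic {α₁ α₂ α₃ β₁ β₂ β₃ S₁ S₂ S₃ : ℝ}
    (hα : α₁ + α₂ + α₃ = 1) (hβ : β₁ + β₂ + β₃ = 1)
    (hS₁ : 0 < 1 + S₁) (hS₂ : 0 < 1 + S₂) (hS₃ : 0 < 1 + S₃)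
    (hT : 0 < 1 + β₁ * S₁ + β₂ * S₂ + β₃ * S₃)
    (h : α₁ / (1 + S₁) + α₂ / (1 + S₂) + α₃ / (1 + S₃)
      ≤ 1 / (β₁ * (1 + S₁) + β₂ * (1 + S₂) + β₃ * (1 + S₃))) :
    2 * (β₁ * S₁ + β₂ * S₂ + β₃ * S₃) / (1 + β₁ * S₁ + β₂ * S₂ + β₃ * S₃)
      ≤ α₁ * (2 * S₁ / (1 + S₁)) + α₂ * (2 * S₂ / (1 + S₂)) + α₃ * (2 * S₃ / (1 + S₃)) := by
  have two_mul_div {s : ℝ} (hs : 0 < 1 + s) : 2 * s / (1 + s) = 2 - 2 / (1 + s) := by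
    field_simp; ring
  have hβa : β₁ * (1 + S₁) + β₂ * (1 + S₂) + β₃ * (1 + S₃) = 1 + β₁ * S₁ + β₂ * S₂ + β₃ * S₃ := by
    linear_combination hβ
  have hL : 2 * (β₁ * S₁ + β₂ * S₂ + β₃ * S₃) / (1 + β₁ * S₁ + β₂ * S₂ + β₃ * S₃)
      = 2 - 2 / (1 + β₁ * S₁ + β₂ * S₂ + β₃ * S₃) := by
    field_simp; ring
  rw [hβa] at h
  rw [hL, two_mul_div hS₁, two_mul_div hS₂, two_mul_div hS₃]
  linear_combination 2 * h - 2 * hα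

lemma weighted_two_mul_div_one_add_le {K₁ K₂ P S₁ S₂ S₃ : ℝ} (hK₁ : 1 ≤ K₁) (hK₂ : 1 ≤ K₂)
    (hP : K₁ + K₂ = P) (hS₃ : 0 ≤ S₃) (hS₁ : S₁ ∈ Icc S₃ 1) (hS₂ : S₂ ∈ Icc S₃ 1) :
    2 * (K₁ * (K₁ - 1) / (P * (P - 1)) * S₁ + K₂ * (K₂ - 1) / (P * (P - 1)) * S₂
        + 2 * K₁ * K₂ / (P * (P - 1)) * S₃)
      / (1 + K₁ * (K₁ - 1) / (P * (P - 1)) * S₁ + K₂ * (K₂ - 1) / (P * (P - 1)) * S₂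
        + 2 * K₁ * K₂ / (P * (P - 1)) * S₃)
      ≤ (K₁ - 1) / (P - 1) * (2 * S₁ / (1 + S₁)) + (K₂ - 1) / (P - 1) * (2 * S₂ / (1 + S₂))
        + 1 / (P - 1) * (2 * S₃ / (1 + S₃)) := by
  obtain ⟨hS₁l, hS₁u⟩ := hS₁
  obtain ⟨hS₂l, hS₂u⟩ := hS₂
  have hP₁ : P - 1 ≠ 0 := by linarith
  have hP₀ : P ≠ 0 := by linarith
  have hα : (K₁ - 1) / (P - 1) + (K₂ - 1) / (P - 1) + 1 / (P - 1) = 1 := by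
    field_simp; linarith
  have hβ : K₁ * (K₁ - 1) / (P * (P - 1)) + K₂ * (K₂ - 1) / (P * (P - 1))
      + 2 * K₁ * K₂ / (P * (P - 1)) = 1 := by
    field_simp; rw [← hP]; ring
  have hβS : 0 ≤ K₁ * (K₁ - 1) / (P * (P - 1)) * S₁ + K₂ * (K₂ - 1) / (P * (P - 1)) * S₂
      + 2 * K₁ * K₂ / (P * (P - 1)) * S₃ := by
    have hPP : 0 ≤ P * (P - 1) := by nlinarith
    have : 0 ≤ K₁ * (K₁ - 1) / (P * (P - 1)) := div_nonneg (by nlinarith) hPP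
    have : 0 ≤ K₂ * (K₂ - 1) / (P * (P - 1)) := div_nonneg (by nlinarith) hPP
    have : 0 ≤ 2 * K₁ * K₂ / (P * (P - 1)) := div_nonneg (by positivity) hPP
    have : 0 ≤ S₁ := by linarith
    have : 0 ≤ S₂ := by linarith
    positivity
  refine two_mul_div_one_add_le_of_harmonic hα hβ (by linarith) (by linarith) (by linarith)
    (by linarith) (weighted_harmonic_le hK₁ hK₂ hP (by linarith) ?_ ?_) <;>
    exact ⟨by linarith, by linarith⟩

lemma two_mul_sq_div_one_add_sq_le {x : ℝ} (hx : 0 ≤ x) : 2 * x ^ 2 / (1 + x ^ 2) ≤ x := by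
  rw [div_le_iff₀ (by positivity)]
  nlinarith [mul_nonneg hx (sq_nonneg (1 - x))]

theorem stmt14_general (p k₁ k₂ : ℕ) (hk₁ : 1 ≤ k₁) (hk₂ : 1 ≤ k₂)
    (hsum : k₁ + k₂ = p) (x : ℝ) (hx0 : 0 ≤ x)
    (S₁ S₂ : ℝ) (hS₁l : x ^ 2 ≤ S₁) (hS₁u : S₁ ≤ 1) (hS₂l : x ^ 2 ≤ S₂) (hS₂u : S₂ ≤ 1) :
    let α₁ : ℝ := ((k₁ : ℝ) - 1) / ((p : ℝ) - 1)
    let α₂ : ℝ := ((k₂ : ℝ) - 1) / ((p : ℝ) - 1)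
    let α₃ : ℝ := 1 / ((p : ℝ) - 1)
    let β₁ : ℝ := (k₁ : ℝ) * ((k₁ : ℝ) - 1) / ((p : ℝ) * ((p : ℝ) - 1))
    let β₂ : ℝ := (k₂ : ℝ) * ((k₂ : ℝ) - 1) / ((p : ℝ) * ((p : ℝ) - 1))
    let β₃ : ℝ := 2 * (k₁ : ℝ) * (k₂ : ℝ) / ((p : ℝ) * ((p : ℝ) - 1))
    2 * (β₁ * S₁ + β₂ * S₂ + β₃ * x ^ 2) / (1 + β₁ * S₁ + β₂ * S₂ + β₃ * x ^ 2)
      ≤ α₁ * (2 * S₁ / (1 + S₁)) + α₂ * (2 * S₂ / (1 + S₂)) + α₃ * x := by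
  intro α₁ α₂ α₃ β₁ β₂ β₃
  have hK₁ : (1 : ℝ) ≤ k₁ := by exact_mod_cast hk₁
  have hK₂ : (1 : ℝ) ≤ k₂ := by exact_mod_cast hk₂
  have hP : (k₁ : ℝ) + k₂ = p := by exact_mod_cast hsum
  have hα₃ : 0 ≤ α₃ := div_nonneg zero_le_one (by linarith)
  calc _ ≤ α₁ * (2 * S₁ / (1 + S₁)) + α₂ * (2 * S₂ / (1 + S₂)) + α₃ * (2 * x ^ 2 / (1 + x ^ 2)) :=
        weighted_two_mul_div_one_add_le hK₁ hK₂ hP (sq_nonneg x) ⟨hS₁l, hS₁u⟩ ⟨hS₂l, hS₂u⟩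
    _ ≤ _ := by
      gcongr
      exact two_mul_sq_div_one_add_sq_le hx0

/-- Inductive-step inequality for the spanning tree bound: with
`α_i`, `β_i` defined from `k₁ + k₂ = p` and `0 ≤ x ≤ 1`, for all
`S₁, S₂ ∈ [x², 1]`,
`α₁·2S₁/(1+S₁) + α₂·2S₂/(1+S₂) + α₃·x ≥ 2(β₁S₁+β₂S₂+β₃x²)/(1+β₁S₁+β₂S₂+β₃x²)`. -/
theorem stmt14 (p k₁ k₂ : ℕ) (hp : 2 ≤ p) (hk₁ : 1 ≤ k₁) (hk₂ : 1 ≤ k₂)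
    (hsum : k₁ + k₂ = p) (x : ℝ) (hx0 : 0 ≤ x) (hx1 : x ≤ 1)
    (S₁ S₂ : ℝ) (hS₁l : x ^ 2 ≤ S₁) (hS₁u : S₁ ≤ 1) (hS₂l : x ^ 2 ≤ S₂) (hS₂u : S₂ ≤ 1) :
    let α₁ : ℝ := ((k₁ : ℝ) - 1) / ((p : ℝ) - 1)
    let α₂ : ℝ := ((k₂ : ℝ) - 1) / ((p : ℝ) - 1)
    let α₃ : ℝ := 1 / ((p : ℝ) - 1)
    let β₁ : ℝ := (k₁ : ℝ) * ((k₁ : ℝ) - 1) / ((p : ℝ) * ((p : ℝ) - 1))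
    let β₂ : ℝ := (k₂ : ℝ) * ((k₂ : ℝ) - 1) / ((p : ℝ) * ((p : ℝ) - 1))
    let β₃ : ℝ := 2 * (k₁ : ℝ) * (k₂ : ℝ) / ((p : ℝ) * ((p : ℝ) - 1))
    2 * (β₁ * S₁ + β₂ * S₂ + β₃ * x ^ 2) / (1 + β₁ * S₁ + β₂ * S₂ + β₃ * x ^ 2)
      ≤ α₁ * (2 * S₁ / (1 + S₁)) + α₂ * (2 * S₂ / (1 + S₂)) + α₃ * x :=
  stmt14_general p k₁ k₂ hk₁ hk₂ hsum x hx0 S₁ S₂ hS₁l hS₁u hS₂l hS₂u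
end

section
/- With the notation of the previous context (α_i, β_i defined from k_1, k_2, p, and 0 ≤ x ≤ 1), the function f(S_1,S_2) = (2α_1S_1(1+S_2) + 2α_2S_2(1+S_1) + α_3x(1+S_1)(1+S_2))(1 + β_1S_1 + β_2S_2 + β_3x²) − 2(β_1S_1 + β_2S_2 + β_3x²)(1+S_1)(1+S_2) is concave in S_1 and in S_2 separately (∂²f/∂S_i² ≤ 0 for S_1, S_2 ∈ [x²,1]), and satisfies f(x²,x²) = (1+x²)²·α_3·x·(1−x)² ≥ 0. -/
/-!
For fixed `S₂`, `f` is a difference of two products of affine functions of `S₁`, so its second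
`S₁`-derivative is the constant `2β₁((2α₁ + α₃x - 2)(1 + S₂) + 2α₂S₂)`. Since `k₁ + k₂ = p`, the bracket
equals `(x(1 + S₂) - 2k₂ - 2S₂)/(p - 1)`, which is `≤ 0` for `x ≤ 1 ≤ k₂` and `S₂ ≥ 0`. Swapping the
indices `1 ↔ 2` maps `f` to itself with its arguments exchanged, which gives the `S₂`-statement.
The value on the diagonal is a direct computation.
-/

lemma deriv_affine_mul_affine (a b c d : ℝ) :
    deriv (fun s : ℝ => (a * s + b) * (c * s + d)) = fun s => 2 * a * c * s + (a * d + b * c) := by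
  funext s
  have h := (((hasDerivAt_id s).const_mul a).add_const b).mul
    (((hasDerivAt_id s).const_mul c).add_const d)
  refine h.deriv.trans ?_
  simp only [id]
  ring

lemma deriv_deriv_affine_mul_affine_sub (a b c d e g h i t : ℝ) :
    deriv (deriv fun s : ℝ => (a * s + b) * (c * s + d) - (e * s + g) * (h * s + i)) t =
      2 * (a * c - e * h) := by
  have hd : deriv (fun s : ℝ => (a * s + b) * (c * s + d) - (e * s + g) * (h * s + i)) =
      fun s => 2 * (a * c - e * h) * s + (a * d + b * c - (e * i + g * h)) := by
    funext s
    rw [deriv_fun_sub (by fun_prop) (by fun_prop), congrFun (deriv_affine_mul_affine a b c d) s,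
      congrFun (deriv_affine_mul_affine e g h i) s]
    ring
  rw [hd]
  simp

def boundF (α₁ α₂ α₃ β₁ β₂ β₃ x S₁ S₂ : ℝ) : ℝ :=
  (2 * α₁ * S₁ * (1 + S₂) + 2 * α₂ * S₂ * (1 + S₁) + α₃ * x * (1 + S₁) * (1 + S₂)) *
      (1 + β₁ * S₁ + β₂ * S₂ + β₃ * x ^ 2)
    - 2 * (β₁ * S₁ + β₂ * S₂ + β₃ * x ^ 2) * (1 + S₁) * (1 + S₂)

lemma boundF_swap (α₁ α₂ α₃ β₁ β₂ β₃ x S₁ S₂ : ℝ) :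
    boundF α₁ α₂ α₃ β₁ β₂ β₃ x S₁ S₂ = boundF α₂ α₁ α₃ β₂ β₁ β₃ x S₂ S₁ := by
  unfold boundF; ring

lemma deriv_deriv_boundF_left (α₁ α₂ α₃ β₁ β₂ β₃ x S₁ S₂ : ℝ) :
    deriv (deriv fun s => boundF α₁ α₂ α₃ β₁ β₂ β₃ x s S₂) S₁ =
      2 * β₁ * ((2 * α₁ + α₃ * x - 2) * (1 + S₂) + 2 * α₂ * S₂) := by
  have h : (fun s => boundF α₁ α₂ α₃ β₁ β₂ β₃ x s S₂) = fun s =>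
      ((2 * α₁ * (1 + S₂) + 2 * α₂ * S₂ + α₃ * x * (1 + S₂)) * s
          + (2 * α₂ * S₂ + α₃ * x * (1 + S₂))) * (β₁ * s + (1 + β₂ * S₂ + β₃ * x ^ 2))
        - (2 * β₁ * (1 + S₂) * s + 2 * (β₂ * S₂ + β₃ * x ^ 2) * (1 + S₂)) * (1 * s + 1) := by
    funext s; unfold boundF; ring
  rw [h, deriv_deriv_affine_mul_affine_sub]
  ring

lemma deriv_deriv_boundF_right (α₁ α₂ α₃ β₁ β₂ β₃ x S₁ S₂ : ℝ) :
    deriv (deriv fun s => boundF α₁ α₂ α₃ β₁ β₂ β₃ x S₁ s) S₂ =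
      2 * β₂ * ((2 * α₂ + α₃ * x - 2) * (1 + S₁) + 2 * α₁ * S₁) := by
  simp_rw [boundF_swap α₁]
  exact deriv_deriv_boundF_left ..

lemma concavity_coeff_nonpos {k₁ k₂ p x S : ℝ} (hk₁ : 1 ≤ k₁) (hk₂ : 1 ≤ k₂)
    (hsum : k₁ + k₂ = p) (hx : x ≤ 1) (hS : 0 ≤ S) :
    2 * (k₁ * (k₁ - 1) / (p * (p - 1))) *
      ((2 * ((k₁ - 1) / (p - 1)) + 1 / (p - 1) * x - 2) * (1 + S) + 2 * ((k₂ - 1) / (p - 1)) * S)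
      ≤ 0 := by
  have hp : 0 < p - 1 := by linarith
  have hβ : 0 ≤ k₁ * (k₁ - 1) / (p * (p - 1)) := by
    apply div_nonneg <;> nlinarith
  have hbracket : (2 * ((k₁ - 1) / (p - 1)) + 1 / (p - 1) * x - 2) * (1 + S)
      + 2 * ((k₂ - 1) / (p - 1)) * S = (x * (1 + S) - 2 * k₂ - 2 * S) / (p - 1) := by
    rw [← hsum] at hp ⊢
    field_simp
    ring
  rw [hbracket]
  exact mul_nonpos_of_nonneg_of_nonpos (mul_nonneg zero_le_two hβ)
    (div_nonpos_of_nonpos_of_nonneg (by nlinarith) hp.le)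

lemma boundF_diag {k₁ k₂ p : ℝ} (hsum : k₁ + k₂ = p) (hp : 1 < p) (x : ℝ) :
    boundF ((k₁ - 1) / (p - 1)) ((k₂ - 1) / (p - 1)) (1 / (p - 1))
        (k₁ * (k₁ - 1) / (p * (p - 1))) (k₂ * (k₂ - 1) / (p * (p - 1)))
        (2 * k₁ * k₂ / (p * (p - 1))) x (x ^ 2) (x ^ 2) =
      (1 + x ^ 2) ^ 2 * (1 / (p - 1)) * x * (1 - x) ^ 2 := by
  have hp0 : p ≠ 0 := by positivity
  have hp1 : p - 1 ≠ 0 := by linarith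
  unfold boundF
  subst hsum
  field_simp
  ring

theorem stmt15_general (p k₁ k₂ : ℕ) (hk₁ : 1 ≤ k₁) (hk₂ : 1 ≤ k₂)
    (hsum : k₁ + k₂ = p) (x : ℝ) (hx0 : 0 ≤ x) (hx1 : x ≤ 1) :
    let α₁ : ℝ := ((k₁ : ℝ) - 1) / ((p : ℝ) - 1)
    let α₂ : ℝ := ((k₂ : ℝ) - 1) / ((p : ℝ) - 1)
    let α₃ : ℝ := 1 / ((p : ℝ) - 1)
    let β₁ : ℝ := (k₁ : ℝ) * ((k₁ : ℝ) - 1) / ((p : ℝ) * ((p : ℝ) - 1))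
    let β₂ : ℝ := (k₂ : ℝ) * ((k₂ : ℝ) - 1) / ((p : ℝ) * ((p : ℝ) - 1))
    let β₃ : ℝ := 2 * (k₁ : ℝ) * (k₂ : ℝ) / ((p : ℝ) * ((p : ℝ) - 1))
    let f : ℝ → ℝ → ℝ := fun S₁ S₂ =>
      (2 * α₁ * S₁ * (1 + S₂) + 2 * α₂ * S₂ * (1 + S₁) + α₃ * x * (1 + S₁) * (1 + S₂)) *
          (1 + β₁ * S₁ + β₂ * S₂ + β₃ * x ^ 2)
        - 2 * (β₁ * S₁ + β₂ * S₂ + β₃ * x ^ 2) * (1 + S₁) * (1 + S₂)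
    (∀ S₁ S₂ : ℝ, x ^ 2 ≤ S₁ → S₁ ≤ 1 → x ^ 2 ≤ S₂ → S₂ ≤ 1 →
        deriv (deriv (fun s => f s S₂)) S₁ ≤ 0 ∧
        deriv (deriv (fun s => f S₁ s)) S₂ ≤ 0) ∧
    f (x ^ 2) (x ^ 2) = (1 + x ^ 2) ^ 2 * α₃ * x * (1 - x) ^ 2 ∧
    0 ≤ f (x ^ 2) (x ^ 2) := by
  intro α₁ α₂ α₃ β₁ β₂ β₃ f
  have hk₁' : (1 : ℝ) ≤ k₁ := by exact_mod_cast hk₁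
  have hk₂' : (1 : ℝ) ≤ k₂ := by exact_mod_cast hk₂
  have hsum' : (k₁ : ℝ) + k₂ = p := by exact_mod_cast hsum
  have hp : (1 : ℝ) < p := by linarith
  have hdiag : f (x ^ 2) (x ^ 2) = (1 + x ^ 2) ^ 2 * α₃ * x * (1 - x) ^ 2 :=
    boundF_diag hsum' hp x
  refine ⟨fun S₁ S₂ hS₁ _ hS₂ _ => ⟨?_, ?_⟩, hdiag, ?_⟩
  · exact (deriv_deriv_boundF_left α₁ α₂ α₃ β₁ β₂ β₃ x S₁ S₂).trans_le
      (concavity_coeff_nonpos hk₁' hk₂' hsum' hx1 ((sq_nonneg x).trans hS₂))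
  · exact (deriv_deriv_boundF_right α₁ α₂ α₃ β₁ β₂ β₃ x S₁ S₂).trans_le
      (concavity_coeff_nonpos hk₂' hk₁' ((add_comm _ _).trans hsum') hx1 ((sq_nonneg x).trans hS₁))
  · have hα₃ : 0 ≤ α₃ := one_div_nonneg.mpr (by linarith)
    rw [hdiag]
    positivity

/-- Properties of the auxiliary function `f(S₁,S₂)` in the spanning tree bound:
it is concave in each variable separately on `[x²,1]` (nonpositive second partial
derivatives), and `f(x²,x²) = (1+x²)²·α₃·x·(1−x)² ≥ 0`. -/
theorem stmt15 (p k₁ k₂ : ℕ) (hp : 2 ≤ p) (hk₁ : 1 ≤ k₁) (hk₂ : 1 ≤ k₂)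
    (hsum : k₁ + k₂ = p) (x : ℝ) (hx0 : 0 ≤ x) (hx1 : x ≤ 1) :
    let α₁ : ℝ := ((k₁ : ℝ) - 1) / ((p : ℝ) - 1)
    let α₂ : ℝ := ((k₂ : ℝ) - 1) / ((p : ℝ) - 1)
    let α₃ : ℝ := 1 / ((p : ℝ) - 1)
    let β₁ : ℝ := (k₁ : ℝ) * ((k₁ : ℝ) - 1) / ((p : ℝ) * ((p : ℝ) - 1))
    let β₂ : ℝ := (k₂ : ℝ) * ((k₂ : ℝ) - 1) / ((p : ℝ) * ((p : ℝ) - 1))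
    let β₃ : ℝ := 2 * (k₁ : ℝ) * (k₂ : ℝ) / ((p : ℝ) * ((p : ℝ) - 1))
    let f : ℝ → ℝ → ℝ := fun S₁ S₂ =>
      (2 * α₁ * S₁ * (1 + S₂) + 2 * α₂ * S₂ * (1 + S₁) + α₃ * x * (1 + S₁) * (1 + S₂)) *
          (1 + β₁ * S₁ + β₂ * S₂ + β₃ * x ^ 2)
        - 2 * (β₁ * S₁ + β₂ * S₂ + β₃ * x ^ 2) * (1 + S₁) * (1 + S₂)
    (∀ S₁ S₂ : ℝ, x ^ 2 ≤ S₁ → S₁ ≤ 1 → x ^ 2 ≤ S₂ → S₂ ≤ 1 →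
        deriv (deriv (fun s => f s S₂)) S₁ ≤ 0 ∧
        deriv (deriv (fun s => f S₁ s)) S₂ ≤ 0) ∧
    f (x ^ 2) (x ^ 2) = (1 + x ^ 2) ^ 2 * α₃ * x * (1 - x) ^ 2 ∧
    0 ≤ f (x ^ 2) (x ^ 2) :=
  stmt15_general p k₁ k₂ hk₁ hk₂ hsum x hx0 hx1
end
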